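/- arXiv:2603.28268 — 2 statements merged into one kernel-verified Lean document; each statement's English description precedes it below -/
import Mathlib

section
/- For every real L > 1 there exists n₀ such that the following holds for all n ≥ n₀, all integers d with 2 ≤ d ≤ (log n)^L, all integers k ≥ √n·d, and every d-regular graph G on vertex set [n]: with probability at least 0.99 over a uniformly random coloring ρ : [n] → [k], for every set C of non-monochromatic edges of G, the number of unordered pairs of distinct edges e, e' ∈ C with ρ(e) = ρ(e') is at most 18·|C|·log k (equivalently, if |C| ≥ 2, the fraction of unordered pairs of distinct edges in C having two colors in common is at most 36·log k/(|C|−1)). -/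
set_option maxHeartbeats 1600000

open Finset

/-- The color set `ρ(e) := {ρ(u), ρ(v)}` of an edge `e = {u,v}`. -/
def colorPair {n k : ℕ} (ρ : Fin n → Fin k) : Sym2 (Fin n) → Finset (Fin k) :=
  Sym2.lift ⟨fun u v => {ρ u, ρ v}, fun u v => Finset.pair_comm (ρ u) (ρ v)⟩



section counting
variable {n k : ℕ}

open Classical in
lemma count_colorings (W : Finset (Fin n)) (A : Finset (Fin k)) :
    ((Finset.univ.filter (fun ρ : Fin n → Fin k => ∀ x ∈ W, ρ x ∈ A)).card)
      ≤ A.card ^ W.card * k ^ (n - W.card) := by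
  classical
  have hle : ((Finset.univ.filter (fun ρ : Fin n → Fin k => ∀ x ∈ W, ρ x ∈ A)).card)
      ≤ ((Finset.univ : Finset (Fin n)).pi (fun x => if x ∈ W then A else Finset.univ)).card := by
    apply Finset.card_le_card_of_injOn (fun ρ => fun x _ => ρ x)
    · intro ρ hρ
      rw [Finset.mem_coe, Finset.mem_filter] at hρ
      rw [Finset.mem_coe, Finset.mem_pi]
      intro x _
      split_ifs with hx
      · exact hρ.2 x hx
      · exact Finset.mem_univ _
    · intro a _ b _ h
      funext x
      exact congrFun (congrFun h x) (Finset.mem_univ x)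
  refine hle.trans ?_
  rw [Finset.card_pi]
  have h1 : ∀ x : Fin n, (if x ∈ W then A else (Finset.univ : Finset (Fin k))).card
      = if x ∈ W then A.card else k := by
    intro x; split_ifs <;> simp
  rw [Finset.prod_congr rfl (fun x _ => h1 x), Finset.prod_ite, Finset.prod_const,
    Finset.prod_const]
  have h2 : Finset.univ.filter (fun x => x ∈ W) = W := by
    ext x; simp
  have h3 : (Finset.univ.filter (fun x : Fin n => ¬ x ∈ W)).card = n - W.card := by
    rw [Finset.filter_not, h2]
    simp [Finset.card_sdiff_of_subset (Finset.subset_univ W)]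
  rw [h2, h3]

open Classical in
lemma count_two_colorings (W : Finset (Fin n)) :
    ((Finset.univ.filter (fun ρ : Fin n → Fin k =>
        ∃ a b : Fin k, ∀ x ∈ W, ρ x = a ∨ ρ x = b)).card)
      ≤ k ^ 2 * (2 ^ W.card * k ^ (n - W.card)) := by
  classical
  have hsub : (Finset.univ.filter (fun ρ : Fin n → Fin k =>
        ∃ a b : Fin k, ∀ x ∈ W, ρ x = a ∨ ρ x = b))
      ⊆ (Finset.univ ×ˢ Finset.univ : Finset (Fin k × Fin k)).biUnion
          (fun ab => Finset.univ.filter (fun ρ : Fin n → Fin k =>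
            ∀ x ∈ W, ρ x ∈ ({ab.1, ab.2} : Finset (Fin k)))) := by
    intro ρ hρ
    rw [Finset.mem_filter] at hρ
    obtain ⟨a, b, hab⟩ := hρ.2
    rw [Finset.mem_biUnion]
    exact ⟨(a, b), by simp, by
      rw [Finset.mem_filter]
      exact ⟨Finset.mem_univ _, fun x hx => by
        rcases hab x hx with h | h <;> simp [h]⟩⟩
  refine (Finset.card_le_card hsub).trans ?_
  refine (Finset.card_biUnion_le).trans ?_
  have hbound : ∀ ab : Fin k × Fin k,
      (Finset.univ.filter (fun ρ : Fin n → Fin k =>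
        ∀ x ∈ W, ρ x ∈ ({ab.1, ab.2} : Finset (Fin k)))).card
      ≤ 2 ^ W.card * k ^ (n - W.card) := by
    intro ab
    refine (count_colorings W _).trans ?_
    have : ({ab.1, ab.2} : Finset (Fin k)).card ≤ 2 :=
      (Finset.card_insert_le _ _).trans (by simp)
    exact Nat.mul_le_mul_right _ (Nat.pow_le_pow_left this _)
  refine (Finset.sum_le_sum (fun ab _ => hbound ab)).trans ?_
  rw [Finset.sum_const]
  simp [Finset.card_product, sq, mul_assoc]

end counting



section graphs
variable {n k : ℕ}

open Classical

def vset (e : Sym2 (Fin n)) : Finset (Fin n) := Finset.univ.filter (· ∈ e)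

def espan (F : Finset (Sym2 (Fin n))) : Finset (Fin n) := F.biUnion vset

lemma mem_espan {F : Finset (Sym2 (Fin n))} {x : Fin n} :
    x ∈ espan F ↔ ∃ e ∈ F, x ∈ e := by
  simp [espan, vset]

lemma vset_card {e : Sym2 (Fin n)} (he : ¬ e.IsDiag) : (vset e).card = 2 := by
  induction e with
  | _ u v =>
    rw [Sym2.mk_isDiag_iff] at he
    have : vset s(u, v) = {u, v} := by
      ext x; simp [vset, Sym2.mem_iff]
    rw [this, Finset.card_pair he]

lemma mem_colorPair {ρ : Fin n → Fin k} {e : Sym2 (Fin n)} {x : Fin n} (hx : x ∈ e) :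
    ρ x ∈ colorPair ρ e := by
  induction e with
  | _ u v =>
    rw [Sym2.mem_iff] at hx
    rcases hx with h | h <;> simp [colorPair, h]

lemma sum_deg_eq (F : Finset (Sym2 (Fin n))) (hF : ∀ e ∈ F, ¬ e.IsDiag) :
    ∑ v : Fin n, (Finset.univ.filter (fun u => s(v, u) ∈ F)).card = 2 * F.card := by
  classical
  set P := (Finset.univ ×ˢ Finset.univ : Finset (Fin n × Fin n)).filter
      (fun p => s(p.1, p.2) ∈ F) with hPdef
  have key : ∀ v : Fin n, (Finset.univ.filter (fun u => s(v, u) ∈ F)).card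
      = (P.filter (fun p => p.1 = v)).card := by
    intro v
    apply Finset.card_nbij' (i := fun u => (v, u)) (j := fun p => p.2)
    · intro u hu
      simp only [Finset.mem_coe, Finset.mem_filter, Finset.mem_univ, true_and] at hu
      simp only [Finset.mem_coe, hPdef, Finset.mem_filter, Finset.mem_product, Finset.mem_univ, true_and]
      exact ⟨hu, trivial⟩
    · intro p hp
      simp only [Finset.mem_coe, hPdef, Finset.mem_filter, Finset.mem_product, Finset.mem_univ, true_and] at hp
      simp only [Finset.mem_coe, Finset.mem_filter, Finset.mem_univ, true_and]
      obtain ⟨hmem, hfst⟩ := hp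
      rwa [← hfst]
    · intro u _; rfl
    · intro p hp
      simp only [Finset.mem_coe, hPdef, Finset.mem_filter] at hp
      exact Prod.ext hp.2.symm rfl
  have hfib : P.card = ∑ v : Fin n, (P.filter (fun p => p.1 = v)).card :=
    Finset.card_eq_sum_card_fiberwise (fun p _ => Finset.mem_univ _)
  have hP : P.card = 2 * F.card := by
    have hdecomp : P = F.biUnion (fun e =>
        (Finset.univ ×ˢ Finset.univ : Finset (Fin n × Fin n)).filter
          (fun p => s(p.1, p.2) = e)) := by
      ext p
      simp only [hPdef, Finset.mem_filter, Finset.mem_biUnion]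
      constructor
      · rintro ⟨hp, he⟩; exact ⟨_, he, hp, rfl⟩
      · rintro ⟨e, he, hp, hpe⟩; exact ⟨hp, hpe ▸ he⟩
    rw [hdecomp, Finset.card_biUnion]
    · have hcard2 : ∀ e ∈ F, ((Finset.univ ×ˢ Finset.univ : Finset (Fin n × Fin n)).filter
          (fun p => s(p.1, p.2) = e)).card = 2 := by
        intro e he
        induction e with
        | _ x y =>
          have hxy : x ≠ y := by
            intro h; exact hF _ he (by rw [Sym2.mk_isDiag_iff]; exact h)
          have hset : ((Finset.univ ×ˢ Finset.univ : Finset (Fin n × Fin n)).filter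
              (fun p => s(p.1, p.2) = s(x, y))) = {(x, y), (y, x)} := by
            ext p
            simp only [Finset.mem_filter, Finset.mem_product, Finset.mem_univ, true_and,
              Finset.mem_insert, Finset.mem_singleton, Sym2.eq_iff, Prod.ext_iff]
          rw [hset, Finset.card_insert_of_notMem, Finset.card_singleton]
          simp only [Finset.mem_singleton, Prod.ext_iff, not_and]
          intro h; exact absurd h hxy
      rw [Finset.sum_congr rfl hcard2, Finset.sum_const, smul_eq_mul, mul_comm]
    · intro e he e' he' hne
      simp only [Finset.disjoint_left, Finset.mem_filter]
      rintro p ⟨_, h1⟩ ⟨_, h2⟩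
      exact hne (h1 ▸ h2 ▸ rfl)
  rw [Finset.sum_congr rfl (fun v _ => key v), ← hfib, hP]

lemma exists_maximal_matching (F : Finset (Sym2 (Fin n))) (hF : F.Nonempty) :
    ∃ M, M ⊆ F ∧ M.Nonempty ∧
      (∀ e ∈ M, ∀ e' ∈ M, e ≠ e' → ∀ x, x ∈ e → ¬ x ∈ e') ∧
      (∀ e ∈ F, ∃ x, x ∈ e ∧ x ∈ espan M) := by
  classical
  set 𝒮 := F.powerset.filter
    (fun M => ∀ e ∈ M, ∀ e' ∈ M, e ≠ e' → ∀ x, x ∈ e → ¬ x ∈ e') with h𝒮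
  have hempty : (∅ : Finset (Sym2 (Fin n))) ∈ 𝒮 := by
    simp [h𝒮]
  obtain ⟨M, hM𝒮, hMmax⟩ := Finset.exists_max_image 𝒮 Finset.card ⟨∅, hempty⟩
  simp only [h𝒮, Finset.mem_filter, Finset.mem_powerset] at hM𝒮
  have hmaxprop : ∀ e ∈ F, ∃ x, x ∈ e ∧ x ∈ espan M := by
    intro e he
    by_contra hcon
    push_neg at hcon
    have heM : e ∉ M := by
      intro heM
      exact hcon e.out.1 (Sym2.out_fst_mem e) (mem_espan.mpr ⟨_, heM, Sym2.out_fst_mem e⟩)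
    have hins : insert e M ∈ 𝒮 := by
      simp only [h𝒮, Finset.mem_filter, Finset.mem_powerset]
      constructor
      · exact Finset.insert_subset he hM𝒮.1
      · intro f hf f' hf' hne x hx
        rcases Finset.mem_insert.mp hf with rfl | hfM
        · rcases Finset.mem_insert.mp hf' with rfl | hf'M
          · exact absurd rfl hne
          · intro hx'
            exact hcon x hx (mem_espan.mpr ⟨_, hf'M, hx'⟩)
        · rcases Finset.mem_insert.mp hf' with rfl | hf'M
          · intro hx'
            exact hcon x hx' (mem_espan.mpr ⟨_, hfM, hx⟩)
          · exact hM𝒮.2 f hfM f' hf'M hne x hx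
    have := hMmax _ hins
    rw [Finset.card_insert_of_notMem heM] at this
    omega
  refine ⟨M, hM𝒮.1, ?_, hM𝒮.2, hmaxprop⟩
  rcases Finset.eq_empty_or_nonempty M with rfl | hne
  · obtain ⟨e, he⟩ := hF
    obtain ⟨x, _, hx⟩ := hmaxprop e he
    simp [espan] at hx
  · exact hne

lemma espan_card {M : Finset (Sym2 (Fin n))} (hdiag : ∀ e ∈ M, ¬ e.IsDiag)
    (hdisj : ∀ e ∈ M, ∀ e' ∈ M, e ≠ e' → ∀ x, x ∈ e → ¬ x ∈ e') :
    (espan M).card = 2 * M.card := by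
  classical
  rw [espan, Finset.card_biUnion]
  · rw [Finset.sum_congr rfl (fun e he => vset_card (hdiag e he)), Finset.sum_const,
      smul_eq_mul, mul_comm]
  · intro e he e' he' hne
    simp only [Finset.disjoint_left, vset, Finset.mem_filter]
    rintro x ⟨_, h1⟩ ⟨_, h2⟩
    exact hdisj e he e' he' hne x h1 h2

lemma espan_card_le {F : Finset (Sym2 (Fin n))} (hdiag : ∀ e ∈ F, ¬ e.IsDiag) :
    (espan F).card ≤ 2 * F.card := by
  classical
  refine (Finset.card_biUnion_le).trans ?_
  rw [Finset.sum_congr rfl (fun e he => vset_card (hdiag e he)), Finset.sum_const,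
    smul_eq_mul, mul_comm]

end graphs

noncomputable def cfilter {α : Type*} (p : α → Prop) (s : Finset α) : Finset α :=
  @Finset.filter α p (fun a => Classical.propDecidable (p a)) s

lemma mem_cfilter {α : Type*} {p : α → Prop} {s : Finset α} {a : α} :
    a ∈ cfilter p s ↔ a ∈ s ∧ p a := by
  classical
  rw [cfilter]
  exact Finset.mem_filter

section mainctx
variable {n k : ℕ} (G : SimpleGraph (Fin n)) [DecidableRel G.Adj]

open Classical in
def matchSets (μ : ℕ) : Finset (Finset (Sym2 (Fin n))) :=
  (G.edgeFinset.powersetCard μ).filter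
    (fun M => ∀ e ∈ M, ∀ e' ∈ M, e ≠ e' → ∀ x, x ∈ e → ¬ x ∈ e')

def nbrs (M : Finset (Sym2 (Fin n))) : Finset (Fin n) :=
  (espan M).biUnion (fun v => G.neighborFinset v)

lemma badDecomp (t : ℕ) (ht : 1 ≤ t) (ρ : Fin n → Fin k) (a b : Fin k)
    (hcard : t ≤ ((G.edgeFinset.filter
      (fun e => colorPair ρ e = ({a, b} : Finset (Fin k)))).card)) :
    (∃ v : Fin n, ∃ T ∈ (G.neighborFinset v).powersetCard 5, ∃ a' b' : Fin k,
        ∀ x ∈ insert v T, ρ x = a' ∨ ρ x = b')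
    ∨ (∃ s μ : ℕ, (t ≤ 2*s ∧ s ≤ 2*t ∧ s ≤ n ∧ 1 ≤ μ ∧ 2*μ ≤ s) ∧
        ∃ M ∈ matchSets G μ, ∃ R ∈ ((nbrs G M) \ espan M).powersetCard (s - 2*μ),
          ∃ a' b' : Fin k, ∀ x ∈ espan M ∪ R, ρ x = a' ∨ ρ x = b') := by
  classical
  obtain ⟨F, hFsub, hFcard⟩ := Finset.exists_subset_card_eq hcard
  have hFedge : F ⊆ G.edgeFinset := hFsub.trans (Finset.filter_subset _ _)
  have hFcp : ∀ e ∈ F, colorPair ρ e = ({a, b} : Finset (Fin k)) :=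
    fun e he => (Finset.mem_filter.mp (hFsub he)).2
  have hFdiag : ∀ e ∈ F, ¬ e.IsDiag := by
    intro e he
    exact G.not_isDiag_of_mem_edgeSet (SimpleGraph.mem_edgeFinset.mp (hFedge he))
  have hcolS : ∀ x ∈ espan F, ρ x = a ∨ ρ x = b := by
    intro x hx
    obtain ⟨e, he, hxe⟩ := mem_espan.mp hx
    have := mem_colorPair (ρ := ρ) hxe
    rw [hFcp e he] at this
    simpa using this
  by_cases hstar : ∃ v : Fin n, 5 ≤ (Finset.univ.filter (fun u => s(v, u) ∈ F)).card
  · left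
    obtain ⟨v, hv⟩ := hstar
    obtain ⟨T, hTsub, hTcard⟩ := Finset.exists_subset_card_eq hv
    have hTF : ∀ u ∈ T, s(v, u) ∈ F := by
      intro u hu
      exact (Finset.mem_filter.mp (hTsub hu)).2
    have hTnbr : T ⊆ G.neighborFinset v := by
      intro u hu
      rw [SimpleGraph.mem_neighborFinset]
      exact (SimpleGraph.mem_edgeSet G).mp (SimpleGraph.mem_edgeFinset.mp (hFedge (hTF u hu)))
    refine ⟨v, T, Finset.mem_powersetCard.mpr ⟨hTnbr, hTcard⟩, a, b, ?_⟩
    intro x hx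
    rcases Finset.mem_insert.mp hx with rfl | hxT
    · have hTne : T.Nonempty := Finset.card_pos.mp (by omega)
      obtain ⟨u, hu⟩ := hTne
      have : ρ x ∈ colorPair ρ s(x, u) := mem_colorPair (Sym2.mem_mk_left x u)
      rw [hFcp _ (hTF u hu)] at this
      simpa using this
    · have : ρ x ∈ colorPair ρ s(v, x) := mem_colorPair (Sym2.mem_mk_right v x)
      rw [hFcp _ (hTF x hxT)] at this
      simpa using this
  · right
    push_neg at hstar
    have hdeg : ∀ v : Fin n, (Finset.univ.filter (fun u => s(v, u) ∈ F)).card ≤ 4 := by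
      intro v; have := hstar v; omega
    have hvanish : ∀ v : Fin n, v ∉ espan F →
        (Finset.univ.filter (fun u => s(v, u) ∈ F)) = ∅ := by
      intro v hv
      rw [Finset.filter_eq_empty_iff]
      intro u _ hmem
      exact hv (mem_espan.mpr ⟨_, hmem, Sym2.mem_mk_left v u⟩)
    have hsum2 : ∑ v ∈ espan F, (Finset.univ.filter (fun u => s(v, u) ∈ F)).card
        = 2 * F.card := by
      rw [← sum_deg_eq F hFdiag]
      apply Finset.sum_subset (Finset.subset_univ _)
      intro v _ hv
      rw [hvanish v hv, Finset.card_empty]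
    have hs2 : 2 * t ≤ 4 * (espan F).card := by
      rw [← hFcard, ← hsum2]
      calc ∑ v ∈ espan F, (Finset.univ.filter (fun u => s(v, u) ∈ F)).card
          ≤ ∑ _v ∈ espan F, 4 := Finset.sum_le_sum (fun v _ => hdeg v)
        _ = 4 * (espan F).card := by rw [Finset.sum_const, smul_eq_mul, mul_comm]
    have hFne : F.Nonempty := Finset.card_pos.mp (by omega)
    obtain ⟨M, hMsub, hMne, hMdisj, hMmax⟩ := exists_maximal_matching F hFne
    have hMdiag : ∀ e ∈ M, ¬ e.IsDiag := fun e he => hFdiag e (hMsub he)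
    have hspanM : (espan M).card = 2 * M.card := espan_card hMdiag hMdisj
    have hspan_sub : espan M ⊆ espan F := by
      intro x hx
      obtain ⟨e, he, hxe⟩ := mem_espan.mp hx
      exact mem_espan.mpr ⟨e, hMsub he, hxe⟩
    have h2μs : 2 * M.card ≤ (espan F).card := by
      rw [← hspanM]; exact Finset.card_le_card hspan_sub
    set R := espan F \ espan M with hRdef
    have hRcard : R.card = (espan F).card - 2 * M.card := by
      rw [hRdef, Finset.card_sdiff_of_subset hspan_sub, hspanM]
    have hRsub : R ⊆ (nbrs G M) \ espan M := by
      intro r hr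
      rw [hRdef, Finset.mem_sdiff] at hr
      obtain ⟨hrF, hrM⟩ := hr
      obtain ⟨e, heF, hre⟩ := mem_espan.mp hrF
      obtain ⟨x, hxe, hxM⟩ := hMmax e heF
      have hxr : r ≠ x := by
        rintro rfl; exact hrM hxM
      have hex : e = s(r, x) := (Sym2.mem_and_mem_iff hxr).mp ⟨hre, hxe⟩
      have hadj : G.Adj r x := by
        rw [hex] at heF
        exact (SimpleGraph.mem_edgeSet G).mp (SimpleGraph.mem_edgeFinset.mp (hFedge heF))
      rw [Finset.mem_sdiff]
      constructor
      · rw [nbrs, Finset.mem_biUnion]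
        exact ⟨x, hxM, by rw [SimpleGraph.mem_neighborFinset]; exact hadj.symm⟩
      · exact hrM
    refine ⟨(espan F).card, M.card, ⟨by omega, by rw [← hFcard]; exact espan_card_le hFdiag,
      by simpa using Finset.card_le_univ (espan F), Finset.card_pos.mpr hMne, h2μs⟩,
      M, ?_, R, Finset.mem_powersetCard.mpr ⟨hRsub, hRcard⟩, a, b, ?_⟩
    · rw [matchSets, Finset.mem_filter, Finset.mem_powersetCard]
      exact ⟨⟨hMsub.trans hFedge, rfl⟩, hMdisj⟩
    · intro x hx
      apply hcolS
      have : espan M ∪ R = espan F := Finset.union_sdiff_of_subset hspan_sub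
      rwa [this] at hx

lemma goodImp (ρ : Fin n → Fin k) (t : ℕ)
    (hgood : ∀ a b : Fin k, a ≠ b →
      ((G.edgeFinset.filter (fun e => colorPair ρ e = ({a, b} : Finset (Fin k)))).card) < t)
    (C : Finset (Sym2 (Fin n))) (hC : C ⊆ G.edgeFinset)
    (hmono : ∀ e ∈ C, ¬ (Sym2.map ρ e).IsDiag) :
    (((C.powersetCard 2).filter
        (fun s => ∃ e ∈ s, ∃ e' ∈ s, e ≠ e' ∧ colorPair ρ e = colorPair ρ e')).card)
      ≤ C.card * (t - 2) := by
  classical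
  have hsub : ((C.powersetCard 2).filter
      (fun s => ∃ e ∈ s, ∃ e' ∈ s, e ≠ e' ∧ colorPair ρ e = colorPair ρ e'))
      ⊆ C.biUnion (fun e => (C.filter
          (fun e' => e' ≠ e ∧ colorPair ρ e' = colorPair ρ e)).image
            (fun e' => ({e, e'} : Finset (Sym2 (Fin n))))) := by
    intro s hs
    rw [Finset.mem_filter, Finset.mem_powersetCard] at hs
    obtain ⟨⟨hsC, hs2⟩, w, hw, w', hw', hne, hcp⟩ := hs
    have hsw : s = {w, w'} := by
      have hsub' : ({w, w'} : Finset (Sym2 (Fin n))) ⊆ s := by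
        intro z hz
        rcases Finset.mem_insert.mp hz with rfl | hz
        · exact hw
        · rw [Finset.mem_singleton] at hz; subst hz; exact hw'
      have hcard' : s.card ≤ ({w, w'} : Finset (Sym2 (Fin n))).card := by
        rw [Finset.card_pair hne, hs2]
      exact (Finset.eq_of_subset_of_card_le hsub' hcard').symm
    rw [Finset.mem_biUnion]
    refine ⟨w, hsC hw, ?_⟩
    rw [Finset.mem_image]
    exact ⟨w', Finset.mem_filter.mpr ⟨hsC hw', hne.symm, hcp.symm⟩, by rw [hsw]⟩
  refine (Finset.card_le_card hsub).trans ?_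
  refine (Finset.card_biUnion_le).trans ?_
  have hbound : ∀ e ∈ C, ((C.filter
      (fun e' => e' ≠ e ∧ colorPair ρ e' = colorPair ρ e)).image
        (fun e' => ({e, e'} : Finset (Sym2 (Fin n))))).card ≤ t - 2 := by
    intro e he
    refine (Finset.card_image_le).trans ?_
    -- colorPair of a non-monochromatic edge is a pair of distinct colors
    obtain ⟨a, b, hab, hcp⟩ : ∃ a b : Fin k, a ≠ b ∧
        colorPair ρ e = ({a, b} : Finset (Fin k)) := by
      induction e with
      | _ u v =>
        refine ⟨ρ u, ρ v, ?_, rfl⟩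
        intro hcon
        exact hmono _ he (by rw [Sym2.map_pair_eq, Sym2.mk_isDiag_iff]; exact hcon)
    have hclass := hgood a b hab
    have hsub2 : C.filter (fun e' => e' ≠ e ∧ colorPair ρ e' = colorPair ρ e)
        ⊆ (G.edgeFinset.filter
            (fun e' => colorPair ρ e' = ({a, b} : Finset (Fin k)))).erase e := by
      intro e' he'
      rw [Finset.mem_filter] at he'
      rw [Finset.mem_erase, Finset.mem_filter]
      exact ⟨he'.2.1, hC he'.1, by rw [he'.2.2, hcp]⟩
    refine (Finset.card_le_card hsub2).trans ?_
    have hemem : e ∈ G.edgeFinset.filter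
        (fun e' => colorPair ρ e' = ({a, b} : Finset (Fin k))) :=
      Finset.mem_filter.mpr ⟨hC he, hcp⟩
    have herase := Finset.card_erase_of_mem hemem
    omega
  refine (Finset.sum_le_sum hbound).trans ?_
  rw [Finset.sum_const, smul_eq_mul]

lemma star_count (hreg : G.IsRegularOfDegree d) :
    ((cfilter (fun ρ : Fin n → Fin k => ∃ v : Fin n,
        ∃ T ∈ (G.neighborFinset v).powersetCard 5, ∃ a b : Fin k,
          ∀ x ∈ insert v T, ρ x = a ∨ ρ x = b) Finset.univ).card)
      ≤ n * (d.choose 5) * (k ^ 2 * (2 ^ 6 * k ^ (n - 6))) := by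
  classical
  have hsub : (cfilter (fun ρ : Fin n → Fin k => ∃ v : Fin n,
        ∃ T ∈ (G.neighborFinset v).powersetCard 5, ∃ a b : Fin k,
          ∀ x ∈ insert v T, ρ x = a ∨ ρ x = b) Finset.univ)
      ⊆ (Finset.univ : Finset (Fin n)).biUnion (fun v =>
          ((G.neighborFinset v).powersetCard 5).biUnion (fun T =>
            Finset.univ.filter (fun ρ : Fin n → Fin k =>
              ∃ a b : Fin k, ∀ x ∈ insert v T, ρ x = a ∨ ρ x = b))) := by
    intro ρ hρ
    rw [mem_cfilter] at hρ
    obtain ⟨_, v, T, hT, hab⟩ := hρ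
    rw [Finset.mem_biUnion]
    refine ⟨v, Finset.mem_univ _, ?_⟩
    rw [Finset.mem_biUnion]
    exact ⟨T, hT, Finset.mem_filter.mpr ⟨Finset.mem_univ _, hab⟩⟩
  refine (Finset.card_le_card hsub).trans ?_
  refine (Finset.card_biUnion_le).trans ?_
  have hinner : ∀ v : Fin n,
      (((G.neighborFinset v).powersetCard 5).biUnion (fun T =>
        Finset.univ.filter (fun ρ : Fin n → Fin k =>
          ∃ a b : Fin k, ∀ x ∈ insert v T, ρ x = a ∨ ρ x = b))).card
      ≤ (d.choose 5) * (k ^ 2 * (2 ^ 6 * k ^ (n - 6))) := by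
    intro v
    refine (Finset.card_biUnion_le).trans ?_
    have hT : ∀ T ∈ (G.neighborFinset v).powersetCard 5,
        (Finset.univ.filter (fun ρ : Fin n → Fin k =>
          ∃ a b : Fin k, ∀ x ∈ insert v T, ρ x = a ∨ ρ x = b)).card
        ≤ k ^ 2 * (2 ^ 6 * k ^ (n - 6)) := by
      intro T hT
      rw [Finset.mem_powersetCard] at hT
      have hvT : v ∉ T := by
        intro hv
        have := hT.1 hv
        rw [SimpleGraph.mem_neighborFinset] at this
        exact G.irrefl this
      have hcard : (insert v T).card = 6 := by
        rw [Finset.card_insert_of_notMem hvT, hT.2]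
      have := count_two_colorings (k := k) (insert v T)
      rwa [hcard] at this
    refine (Finset.sum_le_sum hT).trans ?_
    rw [Finset.sum_const, smul_eq_mul, Finset.card_powersetCard]
    have : (G.neighborFinset v).card = d := hreg v
    rw [this]
  refine (Finset.sum_le_sum (fun v _ => hinner v)).trans ?_
  rw [Finset.sum_const, smul_eq_mul, Finset.card_univ, Fintype.card_fin, mul_assoc]

lemma cover_count (hreg : G.IsRegularOfDegree d) (s μ : ℕ) (h2μ : 2 * μ ≤ s) :
    ((cfilter (fun ρ : Fin n → Fin k =>
        ∃ M ∈ matchSets G μ, ∃ R ∈ ((nbrs G M) \ espan M).powersetCard (s - 2*μ),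
          ∃ a b : Fin k, ∀ x ∈ espan M ∪ R, ρ x = a ∨ ρ x = b) Finset.univ).card)
      ≤ (G.edgeFinset.card.choose μ) * ((2*μ*d).choose (s - 2*μ))
          * (k ^ 2 * (2 ^ s * k ^ (n - s))) := by
  classical
  have hsub : (cfilter (fun ρ : Fin n → Fin k =>
        ∃ M ∈ matchSets G μ, ∃ R ∈ ((nbrs G M) \ espan M).powersetCard (s - 2*μ),
          ∃ a b : Fin k, ∀ x ∈ espan M ∪ R, ρ x = a ∨ ρ x = b) Finset.univ)
      ⊆ (matchSets G μ).biUnion (fun M =>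
          (((nbrs G M) \ espan M).powersetCard (s - 2*μ)).biUnion (fun R =>
            Finset.univ.filter (fun ρ : Fin n → Fin k =>
              ∃ a b : Fin k, ∀ x ∈ espan M ∪ R, ρ x = a ∨ ρ x = b))) := by
    intro ρ hρ
    rw [mem_cfilter] at hρ
    obtain ⟨_, M, hM, R, hR, hab⟩ := hρ
    rw [Finset.mem_biUnion]
    refine ⟨M, hM, ?_⟩
    rw [Finset.mem_biUnion]
    exact ⟨R, hR, Finset.mem_filter.mpr ⟨Finset.mem_univ _, hab⟩⟩
  refine (Finset.card_le_card hsub).trans ?_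
  refine (Finset.card_biUnion_le).trans ?_
  have hinner : ∀ M ∈ matchSets G μ,
      ((((nbrs G M) \ espan M).powersetCard (s - 2*μ)).biUnion (fun R =>
        Finset.univ.filter (fun ρ : Fin n → Fin k =>
          ∃ a b : Fin k, ∀ x ∈ espan M ∪ R, ρ x = a ∨ ρ x = b))).card
      ≤ ((2*μ*d).choose (s - 2*μ)) * (k ^ 2 * (2 ^ s * k ^ (n - s))) := by
    intro M hM
    rw [matchSets, Finset.mem_filter, Finset.mem_powersetCard] at hM
    obtain ⟨⟨hMedge, hMcard⟩, hMdisj⟩ := hM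
    have hMdiag : ∀ e ∈ M, ¬ e.IsDiag := by
      intro e he
      exact G.not_isDiag_of_mem_edgeSet (SimpleGraph.mem_edgeFinset.mp (hMedge he))
    have hspan : (espan M).card = 2 * μ := by
      rw [espan_card hMdiag hMdisj, hMcard]
    refine (Finset.card_biUnion_le).trans ?_
    have hR : ∀ R ∈ ((nbrs G M) \ espan M).powersetCard (s - 2*μ),
        (Finset.univ.filter (fun ρ : Fin n → Fin k =>
          ∃ a b : Fin k, ∀ x ∈ espan M ∪ R, ρ x = a ∨ ρ x = b)).card
        ≤ k ^ 2 * (2 ^ s * k ^ (n - s)) := by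
      intro R hR
      rw [Finset.mem_powersetCard] at hR
      have hdisjRM : Disjoint (espan M) R := by
        rw [Finset.disjoint_right]
        intro x hx
        have := hR.1 hx
        rw [Finset.mem_sdiff] at this
        exact this.2
      have hcard : (espan M ∪ R).card = s := by
        rw [Finset.card_union_of_disjoint hdisjRM, hspan, hR.2]
        omega
      have := count_two_colorings (k := k) (espan M ∪ R)
      rwa [hcard] at this
    refine (Finset.sum_le_sum hR).trans ?_
    rw [Finset.sum_const, smul_eq_mul, Finset.card_powersetCard]
    apply Nat.mul_le_mul_right
    apply Nat.choose_le_choose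
    calc ((nbrs G M) \ espan M).card ≤ (nbrs G M).card :=
          Finset.card_le_card (Finset.sdiff_subset)
      _ ≤ ∑ v ∈ espan M, (G.neighborFinset v).card := Finset.card_biUnion_le
      _ = ∑ _v ∈ espan M, d := Finset.sum_congr rfl (fun v _ => hreg v)
      _ = 2 * μ * d := by rw [Finset.sum_const, smul_eq_mul, hspan]
  refine (Finset.sum_le_sum hinner).trans ?_
  rw [Finset.sum_const, smul_eq_mul]
  have hms : (matchSets G μ).card ≤ (G.edgeFinset.card).choose μ := by
    refine (Finset.card_le_card (Finset.filter_subset _ _)).trans ?_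
    rw [Finset.card_powersetCard]
  calc (matchSets G μ).card * ((2*μ*d).choose (s - 2*μ) * (k ^ 2 * (2 ^ s * k ^ (n - s))))
      ≤ (G.edgeFinset.card).choose μ * ((2*μ*d).choose (s - 2*μ)
          * (k ^ 2 * (2 ^ s * k ^ (n - s)))) := Nat.mul_le_mul_right _ hms
    _ = _ := by ring

end mainctx

section numerics
open Filter


lemma even_exp_bound (c b p : ℝ) (hb : 0 < b) :
    ∀ᶠ K in atTop, c * K ^ p ≤ Real.exp (b * K) := by
  have h := (tendsto_exp_mul_div_rpow_atTop p b hb).eventually_ge_atTop c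
  filter_upwards [h, eventually_gt_atTop (0 : ℝ)] with K hK hK0
  rw [le_div_iff₀ (Real.rpow_pos_of_pos hK0 p)] at hK
  linarith

lemma exists_K1 (L : ℝ) : ∃ K₁ : ℝ, 2 ≤ K₁ ∧ ∀ K : ℝ, K₁ ≤ K →
    (76 * K * (2*K) ^ L ≤ Real.exp (K / 2)) ∧
    (20000000 * K ^ (2:ℕ) ≤ Real.exp (K / 2)) ∧
    (12800 * K ^ L ≤ Real.exp K) := by
  have h1 := even_exp_bound (76 * 2 ^ L) (1/2) (L + 1) (by norm_num)
  have h2 := even_exp_bound 20000000 (1/2) 2 (by norm_num)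
  have h3 := even_exp_bound 12800 1 L (by norm_num)
  have hall := (h1.and (h2.and h3)).and (eventually_gt_atTop (0 : ℝ))
  rw [eventually_atTop] at hall
  obtain ⟨K₀, hK₀⟩ := hall
  refine ⟨max K₀ 2, le_max_right _ _, fun K hK => ?_⟩
  have hK0' : K₀ ≤ K := le_trans (le_max_left _ _) hK
  obtain ⟨⟨c1, c2, c3⟩, hKpos⟩ := hK₀ K hK0'
  refine ⟨?_, ?_, ?_⟩
  · have hexp : (2*K) ^ L = 2 ^ L * K ^ L := Real.mul_rpow (by norm_num) hKpos.le
    have hKL1 : K ^ (L + 1) = K ^ L * K := Real.rpow_add_one hKpos.ne' L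
    calc 76 * K * (2*K) ^ L = (76 * 2 ^ L) * (K ^ L * K) := by rw [hexp]; ring
      _ = (76 * 2 ^ L) * K ^ (L + 1) := by rw [hKL1]
      _ ≤ Real.exp ((1/2) * K) := c1
      _ = Real.exp (K / 2) := by ring_nf
  · have h2' : K ^ ((2:ℕ):ℝ) = K ^ (2:ℕ) := Real.rpow_natCast K 2
    have := c2
    rw [show ((2:ℝ) = ((2:ℕ):ℝ)) by norm_num, h2'] at this
    calc 20000000 * K ^ (2:ℕ) ≤ Real.exp ((1/2) * K) := this
      _ = Real.exp (K / 2) := by ring_nf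
  · calc 12800 * K ^ L ≤ Real.exp (1 * K) := c3
      _ = Real.exp K := by rw [one_mul]

lemma pow_two_le_factorial (μ : ℕ) (h : 1 ≤ μ) : 2 ^ μ ≤ 2 * μ.factorial := by
  have h1 := Nat.factorial_mul_pow_le_factorial (m := 1) (n := μ - 1)
  simp only [Nat.factorial_one, one_mul] at h1
  norm_num at h1
  have h2 : 1 + (μ - 1) = μ := by omega
  rw [h2] at h1
  calc 2 ^ μ = 2 * 2 ^ (μ - 1) := by
        rw [← pow_succ']
        congr 1
        omega
    _ ≤ 2 * μ.factorial := by omega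

/-- the key per-term estimate for the cover sum -/
lemma term_bound (n d k t s μ m : ℕ) (K : ℝ) (hK : K = Real.log k)
    (hk1 : 2 ≤ k) (hd2 : 2 ≤ d)
    (hnd : (n:ℝ) * (d:ℝ)^2 ≤ (k:ℝ)^2)
    (hm : 2 * m = n * d)
    (ht : 18*K + 1 ≤ (t:ℝ))
    (hK2 : 2 ≤ K)
    (hε : ((4*t*d : ℕ) : ℝ) / k ≤ Real.exp (-(K/2)))
    (hs1 : t ≤ 2*s) (hs2 : s ≤ 2*t) (hsn : s ≤ n) (hμ1 : 1 ≤ μ) (h2μ : 2*μ ≤ s) :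
    ((m.choose μ * ((2*μ*d).choose (s - 2*μ)) * (k^2 * (2^s * k^(n-s)))) : ℕ)
      ≤ 8 * Real.exp (-(K/2)) * (k:ℝ)^n := by
  have hkpos : (0:ℝ) < k := by positivity
  have hexpK : Real.exp K = k := by rw [hK]; exact Real.exp_log hkpos
  set j := s - 2*μ with hj
  have hsplit : s = 2*μ + j := by omega
  set ε : ℝ := ((4*t*d : ℕ) : ℝ) / k with hεdef
  have hε0 : 0 ≤ ε := by positivity
  have hε1 : ε ≤ 1 := hε.trans (Real.exp_le_one_iff.mpr (by linarith))
  have hA : ((m.choose μ : ℝ)) * ((2/(k:ℝ))^(2*μ)) ≤ 2 * (1/2)^μ := by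
    have h1 : μ.factorial * m.choose μ ≤ m ^ μ := by
      rw [← Nat.descFactorial_eq_factorial_mul_choose]
      exact Nat.descFactorial_le_pow m μ
    have hfacpos : (0:ℝ) < (μ.factorial : ℝ) := by positivity
    have hchoose : (m.choose μ : ℝ) ≤ (m:ℝ)^μ / (μ.factorial : ℝ) := by
      rw [le_div_iff₀ hfacpos]
      calc (m.choose μ : ℝ) * (μ.factorial : ℝ) = ((μ.factorial * m.choose μ : ℕ) : ℝ) := by
            push_cast; ring
        _ ≤ ((m ^ μ : ℕ) : ℝ) := by exact_mod_cast h1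
        _ = (m:ℝ)^μ := by push_cast; ring
    have h4m : (4 * (m:ℝ)) ≤ (k:ℝ)^2 := by
      have hcast : (4 * (m:ℝ)) = 2 * ((2 * m : ℕ) : ℝ) := by push_cast; ring
      have hd2' : (2:ℝ) ≤ (d:ℝ) := by exact_mod_cast hd2
      have hn0 : (0:ℝ) ≤ (n:ℝ) := Nat.cast_nonneg n
      rw [hcast, hm]
      push_cast
      nlinarith
    have hq : ((m:ℝ) * (2/(k:ℝ))^2) ≤ 1 := by
      rw [div_pow, mul_div_assoc']
      rw [div_le_one (by positivity)]
      nlinarith [Nat.cast_nonneg (α := ℝ) m]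
    have hfac2 : (2:ℝ)^μ ≤ 2 * (μ.factorial : ℝ) := by
      exact_mod_cast pow_two_le_factorial μ hμ1
    calc (m.choose μ : ℝ) * ((2/(k:ℝ))^(2*μ))
        = (m.choose μ : ℝ) * ((2/(k:ℝ))^2)^μ := by rw [← pow_mul]
      _ ≤ ((m:ℝ)^μ / (μ.factorial : ℝ)) * ((2/(k:ℝ))^2)^μ := by
          apply mul_le_mul_of_nonneg_right hchoose (by positivity)
      _ = ((m:ℝ) * (2/(k:ℝ))^2)^μ / (μ.factorial : ℝ) := by rw [mul_pow]; ring
      _ ≤ 1 / (μ.factorial : ℝ) := by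
          gcongr
          exact pow_le_one₀ (by positivity) hq
      _ ≤ 2 * (1/2)^μ := by
          have heq : (2:ℝ) * (1/2)^μ = 2 / 2^μ := by
            rw [one_div, inv_pow, div_eq_mul_inv]
          rw [heq, div_le_div_iff₀ hfacpos (by positivity)]
          linarith [hfac2]
  have hB : (((2*μ*d).choose j : ℝ)) * ((2/(k:ℝ))^j) ≤ ε^j := by
    have h1 : ((2*μ*d).choose j : ℝ) ≤ ((2*μ*d : ℕ):ℝ)^j := by
      exact_mod_cast Nat.choose_le_pow (2*μ*d) j
    have hμt : (μ:ℝ) ≤ (t:ℝ) := by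
      have : μ ≤ t := by omega
      exact_mod_cast this
    have hd0 : (0:ℝ) ≤ (d:ℝ) := Nat.cast_nonneg d
    have hnum : ((2*μ*d : ℕ):ℝ) * 2 ≤ 4*(t:ℝ)*(d:ℝ) := by
      push_cast
      nlinarith
    calc (((2*μ*d).choose j : ℝ)) * ((2/(k:ℝ))^j)
        ≤ ((2*μ*d : ℕ):ℝ)^j * ((2/(k:ℝ))^j) := by
          apply mul_le_mul_of_nonneg_right h1 (by positivity)
      _ = (((2*μ*d : ℕ):ℝ) * (2/(k:ℝ)))^j := by rw [mul_pow]
      _ ≤ ε^j := by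
          apply pow_le_pow_left₀ (by positivity)
          rw [hεdef]
          calc ((2*μ*d : ℕ):ℝ) * (2/(k:ℝ)) = (((2*μ*d : ℕ):ℝ) * 2)/(k:ℝ) := by ring
            _ ≤ (4*(t:ℝ)*(d:ℝ))/(k:ℝ) := by gcongr
            _ = ((4*t*d : ℕ) : ℝ) / k := by push_cast; ring
  have hksplit : (k:ℝ)^s * (k:ℝ)^(n-s) = (k:ℝ)^n := by
    rw [← pow_add]
    congr 1
    omega
  have hkey : (((m.choose μ * ((2*μ*d).choose j) * (k^2 * (2^s * k^(n-s)))) : ℕ) : ℝ)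
      = ((k:ℝ)^2 * (((m.choose μ : ℝ)) * ((2/(k:ℝ))^(2*μ)))
          * ((((2*μ*d).choose j : ℝ)) * ((2/(k:ℝ))^j))) * ((k:ℝ)^s * (k:ℝ)^(n-s)) := by
    have h2k : ((2:ℝ)/k)^(2*μ) * ((2:ℝ)/k)^j = 2^s / (k:ℝ)^s := by
      rw [← pow_add, ← hsplit, div_pow]
    have hkslt : (0:ℝ) < (k:ℝ)^s := by positivity
    have hinner : (2:ℝ)^s * (k:ℝ)^(n-s) = (2^s/(k:ℝ)^s) * ((k:ℝ)^s * (k:ℝ)^(n-s)) := by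
      rw [div_mul_eq_mul_div, mul_comm ((k:ℝ)^s) ((k:ℝ)^(n-s)), ← mul_assoc,
        mul_div_assoc, div_self hkslt.ne', mul_one]
    push_cast
    calc ((m.choose μ : ℝ)) * (((2*μ*d).choose j : ℝ)) * ((k:ℝ)^2 * ((2:ℝ)^s * (k:ℝ)^(n-s)))
        = ((m.choose μ : ℝ)) * (((2*μ*d).choose j : ℝ)) * ((k:ℝ)^2 * ((2^s/(k:ℝ)^s) * ((k:ℝ)^s * (k:ℝ)^(n-s)))) := by
          rw [hinner]
      _ = _ := by rw [← h2k]; ring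
  rw [hkey, hksplit]
  have hk2exp : (k:ℝ)^2 = Real.exp (2*K) := by
    rw [← hexpK, ← Real.exp_nat_mul]
    norm_num
  have hcore : ((k:ℝ)^2 * (((m.choose μ : ℝ)) * ((2/(k:ℝ))^(2*μ)))
      * ((((2*μ*d).choose j : ℝ)) * ((2/(k:ℝ))^j))) ≤ 8 * Real.exp (-(K/2)) := by
    have hx1 : (0:ℝ) ≤ (k:ℝ)^2 := by positivity
    have hstep : ((k:ℝ)^2 * (((m.choose μ : ℝ)) * ((2/(k:ℝ))^(2*μ)))
        * ((((2*μ*d).choose j : ℝ)) * ((2/(k:ℝ))^j)))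
        ≤ (k:ℝ)^2 * (2 * (1/2)^μ) * ε^j := by
      apply mul_le_mul
      · exact mul_le_mul_of_nonneg_left hA hx1
      · exact hB
      · positivity
      · positivity
    refine hstep.trans ?_
    rcases le_or_gt 5 j with hj5 | hj5
    · have h1 : (1/2:ℝ)^μ ≤ 1/2 := by
        calc (1/2:ℝ)^μ ≤ (1/2:ℝ)^1 := pow_le_pow_of_le_one (by norm_num) (by norm_num) hμ1
          _ = 1/2 := pow_one _
      have h2 : ε^j ≤ Real.exp (-(K/2))^5 := by
        calc ε^j ≤ ε^5 := pow_le_pow_of_le_one hε0 hε1 hj5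
          _ ≤ Real.exp (-(K/2))^5 := pow_le_pow_left₀ hε0 hε 5
      have h5 : Real.exp (-(K/2))^5 = Real.exp (5 * (-(K/2))) := by
        rw [← Real.exp_nat_mul]; norm_num
      calc (k:ℝ)^2 * (2 * (1/2)^μ) * ε^j
          ≤ (k:ℝ)^2 * (2 * (1/2)) * (Real.exp (-(K/2))^5) := by
            apply mul_le_mul
            · apply mul_le_mul_of_nonneg_left _ hx1
              linarith
            · exact h2
            · positivity
            · positivity
        _ = Real.exp (2*K) * Real.exp (5 * (-(K/2))) := by
            rw [hk2exp, h5]; ring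
        _ = Real.exp (2*K + 5 * (-(K/2))) := (Real.exp_add _ _).symm
        _ ≤ 8 * Real.exp (-(K/2)) := by
            rw [show (2*K + 5 * (-(K/2)) : ℝ) = -(K/2) by ring]
            nlinarith [Real.exp_pos (-(K/2))]
    · have hμK : 4.5*K - 2 ≤ (μ:ℝ) := by
        have h1 : t ≤ 4*μ + 8 := by omega
        have h1' : (t:ℝ) ≤ 4*(μ:ℝ) + 8 := by exact_mod_cast h1
        linarith
      have hhalf : (1/2:ℝ)^μ ≤ Real.exp (-(Real.log 2) * (4.5*K - 2)) := by
        have hr2 : (1/2:ℝ)^((μ:ℕ):ℝ) ≤ (1/2:ℝ)^((4.5*K - 2):ℝ) :=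
          Real.rpow_le_rpow_of_exponent_ge (by norm_num) (by norm_num) hμK
        have hr3 : (1/2:ℝ)^((4.5*K - 2):ℝ) = Real.exp (Real.log (1/2) * (4.5*K - 2)) :=
          Real.rpow_def_of_pos (by norm_num) _
        have hlog2 : Real.log (1/2:ℝ) = -(Real.log 2) := by
          rw [one_div, Real.log_inv]
        calc (1/2:ℝ)^μ = (1/2:ℝ)^((μ:ℕ):ℝ) := (Real.rpow_natCast _ μ).symm
          _ ≤ (1/2:ℝ)^((4.5*K - 2):ℝ) := hr2
          _ = Real.exp (-(Real.log 2) * (4.5*K - 2)) := by rw [hr3, hlog2]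
      have hεj : ε^j ≤ 1 := pow_le_one₀ hε0 hε1
      have hexpineq : Real.exp (2*K + -(Real.log 2) * (4.5*K - 2)) ≤ 4 * Real.exp (-(K/2)) := by
        have hlog4 : Real.exp (Real.log 4 + -(K/2)) = 4 * Real.exp (-(K/2)) := by
          rw [Real.exp_add, Real.exp_log (by norm_num : (0:ℝ) < 4)]
        rw [← hlog4]
        apply Real.exp_le_exp.mpr
        have hl4 : Real.log 4 = 2 * Real.log 2 := by
          rw [show (4:ℝ) = 2^2 by norm_num, Real.log_pow]
          push_cast; ring
        rw [hl4]
        have hl := Real.log_two_gt_d9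
        have hkey2 : (0:ℝ) ≤ (Real.log 2 - 0.6931471803) * (K - 2) :=
          mul_nonneg (by linarith) (by linarith)
        nlinarith
      calc (k:ℝ)^2 * (2 * (1/2)^μ) * ε^j
          ≤ (k:ℝ)^2 * (2 * Real.exp (-(Real.log 2) * (4.5*K - 2))) * 1 := by
            apply mul_le_mul
            · apply mul_le_mul_of_nonneg_left _ hx1
              linarith
            · exact hεj
            · positivity
            · positivity
        _ = 2 * (Real.exp (2*K) * Real.exp (-(Real.log 2) * (4.5*K - 2))) := by
            rw [hk2exp]; ring
        _ = 2 * Real.exp (2*K + -(Real.log 2) * (4.5*K - 2)) := by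
            rw [← Real.exp_add]
        _ ≤ 2 * (4 * Real.exp (-(K/2))) := by
            apply mul_le_mul_of_nonneg_left hexpineq (by norm_num)
        _ = 8 * Real.exp (-(K/2)) := by ring
  calc ((k:ℝ)^2 * (((m.choose μ : ℝ)) * ((2/(k:ℝ))^(2*μ)))
      * ((((2*μ*d).choose j : ℝ)) * ((2/(k:ℝ))^j))) * ((k:ℝ)^n)
      ≤ (8 * Real.exp (-(K/2))) * ((k:ℝ)^n) :=
        mul_le_mul_of_nonneg_right hcore (by positivity)
    _ = 8 * Real.exp (-(K/2)) * (k:ℝ)^n := by ring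

end numerics

lemma star_term_bound (n d k : ℕ) (h6 : 6 ≤ n) (hd1 : 1 ≤ d) (hk1 : 1 ≤ k)
    (hnd : (n:ℝ)*(d:ℝ)^2 ≤ (k:ℝ)^2) (hdn : 12800*(d:ℝ) ≤ (n:ℝ)) :
    ((n * d.choose 5 * (k^2 * (2^6 * k^(n-6))) : ℕ):ℝ) ≤ 0.005 * (k:ℝ)^n := by
  have hkpos : (0:ℝ) < k := by positivity
  have hdpos : (0:ℝ) < d := by positivity
  have hnpos : (0:ℝ) < n := by positivity
  have hsplit : (k:ℝ)^6 * (k:ℝ)^(n-6) = (k:ℝ)^n := by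
    rw [← pow_add]; congr 1; omega
  have hc5 : (d.choose 5 : ℝ) ≤ (d:ℝ)^5 := by exact_mod_cast Nat.choose_le_pow d 5
  have hcore : (n:ℝ) * (d:ℝ)^5 * ((k:ℝ)^2 * 64) ≤ 0.005 * (k:ℝ)^6 := by
    have h1 : ((n:ℝ)*(d:ℝ)^2)^2 ≤ ((k:ℝ)^2)^2 := by
      apply pow_le_pow_left₀ (by positivity) hnd
    have h2 : 64*(n:ℝ)*(d:ℝ)^5 ≤ 0.005*((n:ℝ)*(d:ℝ)^2)^2 / (d:ℝ)^0 := by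
      have : 64*(n:ℝ)*(d:ℝ)^5 ≤ 0.005*(n:ℝ)^2*(d:ℝ)^4 := by nlinarith
      calc 64*(n:ℝ)*(d:ℝ)^5 ≤ 0.005*(n:ℝ)^2*(d:ℝ)^4 := this
        _ = 0.005*((n:ℝ)*(d:ℝ)^2)^2 / (d:ℝ)^0 := by ring
    rw [pow_zero, div_one] at h2
    calc (n:ℝ) * (d:ℝ)^5 * ((k:ℝ)^2 * 64) = (64*(n:ℝ)*(d:ℝ)^5) * (k:ℝ)^2 := by ring
      _ ≤ (0.005*((n:ℝ)*(d:ℝ)^2)^2) * (k:ℝ)^2 := by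
          apply mul_le_mul_of_nonneg_right h2 (by positivity)
      _ ≤ (0.005*((k:ℝ)^2)^2) * (k:ℝ)^2 := by
          apply mul_le_mul_of_nonneg_right _ (by positivity)
          apply mul_le_mul_of_nonneg_left h1 (by norm_num)
      _ = 0.005 * (k:ℝ)^6 := by ring
  push_cast
  calc (n:ℝ) * (d.choose 5 : ℝ) * ((k:ℝ)^2 * (64 * (k:ℝ)^(n-6)))
      = ((n:ℝ) * (d.choose 5:ℝ) * ((k:ℝ)^2 * 64)) * (k:ℝ)^(n-6) := by ring
    _ ≤ ((n:ℝ) * (d:ℝ)^5 * ((k:ℝ)^2 * 64)) * (k:ℝ)^(n-6) := by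
        apply mul_le_mul_of_nonneg_right _ (by positivity)
        apply mul_le_mul_of_nonneg_right _ (by positivity)
        apply mul_le_mul_of_nonneg_left hc5 (by positivity)
    _ ≤ (0.005 * (k:ℝ)^6) * (k:ℝ)^(n-6) := by
        apply mul_le_mul_of_nonneg_right hcore (by positivity)
    _ = 0.005 * (k:ℝ)^n := by rw [mul_assoc, hsplit]



open Classical in
/-- for every `L > 1` there is `n₀` such that for all `n ≥ n₀`, all degrees
`2 ≤ d ≤ (log n)^L`, all `k ≥ √n·d`, and every `d`-regular graph `G` on `[n]`: with
probability at least `0.99` over a uniformly random coloring `ρ : [n] → [k]`, every set `C` of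
non-monochromatic edges of `G` contains at most `18·|C|·log k` unordered pairs of distinct
edges with `ρ(e) = ρ(e')`. -/
theorem stmt15 (L : ℝ) (hL : 1 < L) :
    ∃ n₀ : ℕ, ∀ n : ℕ, n₀ ≤ n → ∀ d : ℕ, 2 ≤ d → (d : ℝ) ≤ Real.log n ^ L →
      ∀ k : ℕ, Real.sqrt n * (d : ℝ) ≤ (k : ℝ) →
      ∀ G : SimpleGraph (Fin n), ∀ _ : DecidableRel G.Adj, G.IsRegularOfDegree d →
        0.99 * ((k : ℝ) ^ n) ≤
          ((Finset.univ.filter (fun ρ : Fin n → Fin k =>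
              ∀ C ⊆ G.edgeFinset, (∀ e ∈ C, ¬ (Sym2.map ρ e).IsDiag) →
                (((C.powersetCard 2).filter
                    (fun s => ∃ e ∈ s, ∃ e' ∈ s, e ≠ e' ∧
                      colorPair ρ e = colorPair ρ e')).card : ℝ) ≤
                  18 * (C.card : ℝ) * Real.log k)).card : ℝ) := by
  classical
  obtain ⟨K₁, hK₁2, hK₁⟩ := exists_K1 L
  refine ⟨⌈Real.exp (2*K₁)⌉₊ + 1, fun n hn d hd2 hdL k hk G instG hreg => ?_⟩
  -- basic facts about n
  have hnR : Real.exp (2*K₁) ≤ (n:ℝ) := by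
    have h1 : (⌈Real.exp (2*K₁)⌉₊ : ℝ) ≤ (n:ℝ) := by
      exact_mod_cast le_trans (Nat.le_succ _) hn
    exact (Nat.le_ceil _).trans h1
  have hn55 : 55 ≤ n := by
    have he1 : Real.exp 4 ≤ Real.exp (2*K₁) := Real.exp_le_exp.mpr (by linarith)
    have he2 : Real.exp 4 = (Real.exp 1)^4 := by
      rw [← Real.exp_nat_mul]; norm_num
    have he3 : (2.7182818283:ℝ)^4 ≤ (Real.exp 1)^4 :=
      pow_le_pow_left₀ (by norm_num) (le_of_lt Real.exp_one_gt_d9) 4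
    have he4 : (54:ℝ) < (2.7182818283:ℝ)^4 := by norm_num
    have : (54:ℝ) < (n:ℝ) := by
      have := he4.trans_le (he3.trans (he2.symm.le.trans (he1.trans hnR)))
      linarith
    have h54 : 54 < n := by exact_mod_cast this
    omega
  have hn6 : 6 ≤ n := by omega
  have hn0 : (0:ℝ) ≤ (n:ℝ) := Nat.cast_nonneg n
  have hn1 : (1:ℝ) ≤ (n:ℝ) := by
    have : (1:ℕ) ≤ n := by omega
    exact_mod_cast this
  have hdR : (2:ℝ) ≤ (d:ℝ) := by exact_mod_cast hd2
  have hd0 : (0:ℝ) ≤ (d:ℝ) := by linarith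
  have hsqrt7 : (7:ℝ) ≤ Real.sqrt n := by
    have h49 : ((7:ℝ))^2 ≤ (n:ℝ) := by
      norm_num
      have : (55:ℝ) ≤ (n:ℝ) := by exact_mod_cast hn55
      linarith
    nlinarith [Real.sq_sqrt hn0, Real.sqrt_nonneg (n:ℝ)]
  have hkR14 : (14:ℝ) ≤ (k:ℝ) := by
    have : (7:ℝ)*2 ≤ Real.sqrt n * d := by
      apply mul_le_mul hsqrt7 hdR (by norm_num) (Real.sqrt_nonneg _)
    linarith
  have hk2 : 2 ≤ k := by
    have : (2:ℝ) ≤ (k:ℝ) := by linarith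
    exact_mod_cast this
  have hkpos : (0:ℝ) < (k:ℝ) := by positivity
  set K := Real.log k with hKdef
  have hlogn0 : (0:ℝ) ≤ Real.log n := Real.log_nonneg hn1
  have hKn : Real.log n / 2 ≤ K := by
    have hsq : Real.sqrt n ≤ (k:ℝ) := by
      calc Real.sqrt n = Real.sqrt n * 1 := by ring
        _ ≤ Real.sqrt n * d := by
            apply mul_le_mul_of_nonneg_left (by linarith) (Real.sqrt_nonneg _)
        _ ≤ (k:ℝ) := hk
    have := Real.log_le_log (by positivity) hsq
    rwa [Real.log_sqrt hn0] at this
  have hlognK₁ : 2*K₁ ≤ Real.log n := by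
    rw [← Real.log_exp (2*K₁)]
    exact Real.log_le_log (Real.exp_pos _) hnR
  have hKK₁ : K₁ ≤ K := by linarith
  have hK2 : (2:ℝ) ≤ K := le_trans hK₁2 hKK₁
  obtain ⟨c1, c2, _⟩ := hK₁ K hKK₁
  have hnd : (n:ℝ)*(d:ℝ)^2 ≤ (k:ℝ)^2 := by
    have h1 : (Real.sqrt n * d)^2 ≤ (k:ℝ)^2 :=
      pow_le_pow_left₀ (by positivity) hk 2
    calc (n:ℝ)*(d:ℝ)^2 = (Real.sqrt n)^2 * (d:ℝ)^2 := by rw [Real.sq_sqrt hn0]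
      _ = (Real.sqrt n * d)^2 := by ring
      _ ≤ (k:ℝ)^2 := h1
  have hd2K : (d:ℝ) ≤ (2*K)^L := by
    refine hdL.trans ?_
    exact Real.rpow_le_rpow hlogn0 (by linarith) (by linarith)
  set t := ⌊(18:ℝ)*K⌋₊ + 2 with ht_def
  have htlow : 18*K + 1 ≤ (t:ℝ) := by
    have := Nat.lt_floor_add_one ((18:ℝ)*K)
    have hcast : (t:ℝ) = (⌊(18:ℝ)*K⌋₊ : ℝ) + 2 := by
      rw [ht_def]; push_cast; ring
    rw [hcast]; linarith
  have hthigh : (t:ℝ) ≤ 19*K := by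
    have h1 : (⌊(18:ℝ)*K⌋₊ : ℝ) ≤ 18*K := Nat.floor_le (by positivity)
    have hcast : (t:ℝ) = (⌊(18:ℝ)*K⌋₊ : ℝ) + 2 := by
      rw [ht_def]; push_cast; ring
    rw [hcast]; linarith
  have ht1 : 1 ≤ t := by omega
  have hm : 2 * G.edgeFinset.card = n * d := by
    have h1 := G.sum_degrees_eq_twice_card_edges
    have h2 : ∑ v : Fin n, G.degree v = n * d := by
      rw [Finset.sum_congr rfl (fun v _ => hreg v), Finset.sum_const, smul_eq_mul,
        Finset.card_univ, Fintype.card_fin]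
    omega
  have hε : ((4*t*d : ℕ):ℝ)/k ≤ Real.exp (-(K/2)) := by
    have hq1 : (t:ℝ)*(d:ℝ) ≤ (19*K)*((2*K)^L) := by
      apply mul_le_mul hthigh hd2K hd0 (by positivity)
    have h1 : ((4*t*d:ℕ):ℝ) ≤ 76*K*(2*K)^L := by
      calc ((4*t*d:ℕ):ℝ) = ((4:ℕ):ℝ)*(t:ℝ)*(d:ℝ) := by rw [Nat.cast_mul, Nat.cast_mul]
        _ = 4*((t:ℝ)*(d:ℝ)) := by norm_num; ring
        _ ≤ 4*((19*K)*((2*K)^L)) := by linarith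
        _ = 76*K*(2*K)^L := by ring
    have hek : Real.exp K = (k:ℝ) := Real.exp_log hkpos
    have h2 : ((4*t*d:ℕ):ℝ)/k ≤ (Real.exp (K/2))/(k:ℝ) :=
      (div_le_div_iff_of_pos_right hkpos).mpr (h1.trans c1)
    refine h2.trans ?_
    rw [← hek, ← Real.exp_sub]
    apply le_of_eq
    congr 1
    ring
  -- event sets
  set coverP : ℕ × ℕ → (Fin n → Fin k) → Prop := fun p ρ =>
      ∃ M ∈ matchSets G p.2, ∃ R ∈ ((nbrs G M) \ espan M).powersetCard (p.1 - 2*p.2),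
        ∃ a b : Fin k, ∀ x ∈ espan M ∪ R, ρ x = a ∨ ρ x = b with hcoverP
  set badF := cfilter (fun ρ : Fin n → Fin k => ∃ a b : Fin k, a ≠ b ∧
      t ≤ ((G.edgeFinset.filter
        (fun e => colorPair ρ e = ({a,b} : Finset (Fin k)))).card)) Finset.univ with hbadF
  set starF := cfilter (fun ρ : Fin n → Fin k => ∃ v : Fin n,
      ∃ T ∈ (G.neighborFinset v).powersetCard 5, ∃ a b : Fin k,
        ∀ x ∈ insert v T, ρ x = a ∨ ρ x = b) Finset.univ with hstarF
  set pairs := ((Finset.Icc 1 (2*t)) ×ˢ (Finset.Icc 1 t)).filter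
      (fun p => t ≤ 2*p.1 ∧ p.1 ≤ n ∧ 2*p.2 ≤ p.1) with hpairs
  have hsubbad : badF ⊆ starF ∪ pairs.biUnion (fun p => cfilter (coverP p) Finset.univ) := by
    intro ρ hρ
    rw [hbadF] at hρ
    obtain ⟨-, a, b, hab, hcard⟩ := mem_cfilter.mp hρ
    rcases badDecomp G t ht1 ρ a b hcard with hstar
      | ⟨s, μ, ⟨hc1, hc2, hc3, hc4, hc5⟩, hcov⟩
    · exact Finset.mem_union_left _ (mem_cfilter.mpr ⟨Finset.mem_univ _, hstar⟩)
    · refine Finset.mem_union_right _ (Finset.mem_biUnion.mpr ⟨(s, μ), ?_,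
        mem_cfilter.mpr ⟨Finset.mem_univ _, hcov⟩⟩)
      rw [hpairs, Finset.mem_filter, Finset.mem_product, Finset.mem_Icc, Finset.mem_Icc]
      exact ⟨⟨⟨by omega, hc2⟩, by omega, by omega⟩, hc1, hc3, hc5⟩
  -- star bound
  have hdn : 12800*(d:ℝ) ≤ (n:ℝ) := by
    have hKn1 : K₁ ≤ Real.log n := by linarith
    obtain ⟨-, -, c3n⟩ := hK₁ (Real.log n) hKn1
    have hexpn : Real.exp (Real.log n) = (n:ℝ) := Real.exp_log (by linarith)
    have h1 : 12800*(d:ℝ) ≤ 12800*(Real.log n)^L :=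
      mul_le_mul_of_nonneg_left hdL (by norm_num)
    rw [hexpn] at c3n
    linarith
  have hstar_le : (starF.card : ℝ) ≤ 0.005 * (k:ℝ)^n := by
    have h1 := star_count (k := k) G hreg
    have h2 : (starF.card : ℝ) ≤ ((n * d.choose 5 * (k^2*(2^6*k^(n-6))) : ℕ):ℝ) := by
      rw [hstarF]; exact_mod_cast h1
    have hd1' : 1 ≤ d := le_trans one_le_two hd2
    have hk1' : 1 ≤ k := le_trans one_le_two hk2
    exact h2.trans (star_term_bound n d k hn6 hd1' hk1' hnd hdn)
  -- cover bound
  have hcover_le : ∀ p ∈ pairs,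
      ((cfilter (coverP p) Finset.univ).card : ℝ) ≤ 8 * Real.exp (-(K/2)) * (k:ℝ)^n := by
    intro p hp
    rw [hpairs, Finset.mem_filter, Finset.mem_product, Finset.mem_Icc, Finset.mem_Icc] at hp
    obtain ⟨⟨⟨hp1, hp2⟩, hp3, hp4⟩, hq1, hq2, hq3⟩ := hp
    have h1 := cover_count (k := k) G hreg p.1 p.2 hq3
    have h2 : ((cfilter (coverP p) Finset.univ).card : ℝ)
        ≤ ((G.edgeFinset.card.choose p.2 * ((2*p.2*d).choose (p.1-2*p.2))
            * (k^2*(2^(p.1)*k^(n-p.1))) : ℕ):ℝ) := by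
      rw [hcoverP]; exact_mod_cast h1
    exact h2.trans (term_bound n d k t p.1 p.2 G.edgeFinset.card K hKdef hk2 hd2 hnd hm
      htlow hK2 hε hq1 hp2 hq2 hp3 hq3)
  have hpairs_card : pairs.card ≤ 2*t*t := by
    calc pairs.card ≤ ((Finset.Icc 1 (2*t)) ×ˢ (Finset.Icc 1 t)).card :=
          Finset.card_filter_le _ _
      _ = (Finset.Icc 1 (2*t)).card * (Finset.Icc 1 t).card := Finset.card_product _ _
      _ = 2*t*t := by rw [Nat.card_Icc, Nat.card_Icc, Nat.add_sub_cancel, Nat.add_sub_cancel]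
  have hcovtot : (∑ p ∈ pairs, ((cfilter (coverP p) Finset.univ).card : ℝ))
      ≤ 0.005 * (k:ℝ)^n := by
    have h1 : (∑ p ∈ pairs, ((cfilter (coverP p) Finset.univ).card : ℝ))
        ≤ pairs.card • (8 * Real.exp (-(K/2)) * (k:ℝ)^n) :=
      Finset.sum_le_card_nsmul _ _ _ hcover_le
    rw [nsmul_eq_mul] at h1
    refine h1.trans ?_
    have hknn : (0:ℝ) ≤ (k:ℝ)^n := by positivity
    have hnum : (pairs.card : ℝ) * (8 * Real.exp (-(K/2))) ≤ 0.005 := by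
      have hpc : (pairs.card : ℝ) ≤ 2*(t:ℝ)*(t:ℝ) := by
        calc (pairs.card : ℝ) ≤ ((2*t*t : ℕ):ℝ) := by exact_mod_cast hpairs_card
          _ = 2*(t:ℝ)*(t:ℝ) := by rw [Nat.cast_mul, Nat.cast_mul]; norm_num
      have h16 : (pairs.card : ℝ)*8 ≤ 5776*K^2 := by
        have ht0 : (0:ℝ) ≤ (t:ℝ) := Nat.cast_nonneg t
        nlinarith
      have hepos : (0:ℝ) < Real.exp (K/2) := Real.exp_pos _
      have heq : (pairs.card : ℝ) * (8 * Real.exp (-(K/2)))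
          = ((pairs.card : ℝ)*8) / Real.exp (K/2) := by
        rw [Real.exp_neg]; ring
      rw [heq, div_le_iff₀ hepos]
      have := c2
      nlinarith [sq_nonneg K]
    calc (pairs.card:ℝ) * (8 * Real.exp (-(K/2)) * (k:ℝ)^n)
        = ((pairs.card:ℝ) * (8 * Real.exp (-(K/2)))) * (k:ℝ)^n := by ring
      _ ≤ 0.005 * (k:ℝ)^n := mul_le_mul_of_nonneg_right hnum hknn
  have hbad_le : (badF.card : ℝ) ≤ 0.01 * (k:ℝ)^n := by
    have h1 : badF.card ≤ starF.card + (pairs.biUnion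
        (fun p => cfilter (coverP p) Finset.univ)).card :=
      (Finset.card_le_card hsubbad).trans (Finset.card_union_le _ _)
    have h2 : (pairs.biUnion (fun p => cfilter (coverP p) Finset.univ)).card
        ≤ ∑ p ∈ pairs, (cfilter (coverP p) Finset.univ).card :=
      Finset.card_biUnion_le
    have h3 : (badF.card : ℝ) ≤ (starF.card : ℝ)
        + ∑ p ∈ pairs, ((cfilter (coverP p) Finset.univ).card : ℝ) := by
      have := le_trans h1 (Nat.add_le_add_left h2 _)
      push_cast
      exact_mod_cast this
    calc (badF.card : ℝ) ≤ (starF.card : ℝ)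
          + ∑ p ∈ pairs, ((cfilter (coverP p) Finset.univ).card : ℝ) := h3
      _ ≤ 0.005 * (k:ℝ)^n + 0.005 * (k:ℝ)^n := add_le_add hstar_le hcovtot
      _ = 0.01 * (k:ℝ)^n := by ring
  -- good colorings satisfy the statement
  have hsub_target : Finset.univ \ badF ⊆ (Finset.univ.filter (fun ρ : Fin n → Fin k =>
      ∀ C ⊆ G.edgeFinset, (∀ e ∈ C, ¬ (Sym2.map ρ e).IsDiag) →
        (((C.powersetCard 2).filter
            (fun s => ∃ e ∈ s, ∃ e' ∈ s, e ≠ e' ∧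
              colorPair ρ e = colorPair ρ e')).card : ℝ) ≤
          18 * (C.card : ℝ) * Real.log k)) := by
    intro ρ hρ
    rw [Finset.mem_sdiff] at hρ
    rw [Finset.mem_filter]
    refine ⟨Finset.mem_univ _, fun C hC hmono => ?_⟩
    have hgood : ∀ a b : Fin k, a ≠ b → ((G.edgeFinset.filter
        (fun e => colorPair ρ e = ({a,b} : Finset (Fin k)))).card) < t := by
      intro a b hab
      by_contra hcon
      push_neg at hcon
      exact hρ.2 (by rw [hbadF]; exact mem_cfilter.mpr ⟨Finset.mem_univ _, a, b, hab, hcon⟩)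
    have h1 := goodImp G ρ t hgood C hC hmono
    have h2 : (((C.powersetCard 2).filter
        (fun s => ∃ e ∈ s, ∃ e' ∈ s, e ≠ e' ∧
          colorPair ρ e = colorPair ρ e')).card : ℝ) ≤ (C.card : ℝ) * ((t-2:ℕ):ℝ) := by
      exact_mod_cast h1
    have h3 : ((t-2:ℕ):ℝ) ≤ 18*K := by
      have he : (t-2:ℕ) = ⌊(18:ℝ)*K⌋₊ := by omega
      rw [he]
      exact Nat.floor_le (by positivity)
    have hC0 : (0:ℝ) ≤ (C.card:ℝ) := Nat.cast_nonneg _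
    calc (((C.powersetCard 2).filter
        (fun s => ∃ e ∈ s, ∃ e' ∈ s, e ≠ e' ∧
          colorPair ρ e = colorPair ρ e')).card : ℝ)
        ≤ (C.card : ℝ) * ((t-2:ℕ):ℝ) := h2
      _ ≤ (C.card : ℝ) * (18*K) := mul_le_mul_of_nonneg_left h3 hC0
      _ = 18 * (C.card : ℝ) * K := by ring
  -- wrap up cardinalities
  have huniv : (Finset.univ : Finset (Fin n → Fin k)).card = k^n := by
    rw [Finset.card_univ, Fintype.card_fun, Fintype.card_fin, Fintype.card_fin]
  have hbadle : badF.card ≤ k^n := by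
    rw [← huniv]; exact Finset.card_le_card (Finset.subset_univ _)
  have hcard1 : ((Finset.univ \ badF).card : ℝ) = (k:ℝ)^n - (badF.card:ℝ) := by
    rw [Finset.card_sdiff_of_subset (Finset.subset_univ _), huniv, Nat.cast_sub hbadle]
    push_cast
    ring
  have htarget := Finset.card_le_card hsub_target
  calc 0.99 * ((k:ℝ)^n) = (k:ℝ)^n - 0.01*(k:ℝ)^n := by ring
    _ ≤ (k:ℝ)^n - (badF.card:ℝ) := by linarith
    _ = ((Finset.univ \ badF).card : ℝ) := hcard1.symm
    _ ≤ _ := by exact_mod_cast htarget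
end

section
/- Let G be a d-regular graph on n vertices (n even) with edge set E, let ζ ∈ (0, 1/100], and let k ≥ 1 satisfy k·exp(−49·n/(3200·k)) ≤ 0.01. Let S = {v_1, …, v_{n/2}} be a set of n/2 vertices, Ẽ ⊆ E, and π : Ẽ → [n/2] a map with v_{π(e)} ∈ e for all e ∈ Ẽ; for j ∈ [n/2] let d_j := d − |π^{-1}(j)|, and suppose Σ_{j=1}^{n/2} d_j = ζ·|E|. Let ρ : [n] → [k] be a uniformly random coloring, and for i ∈ [k] let C̃_i := {e ∈ Ẽ : ρ(v_{π(e)}) = i}. Then with probability at least 0.99, |C̃_i| ≥ n·d/(6k) for every i ∈ [k]. -/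
/-!
Let `W x` be the number of edges of `Ẽ` assigned to the vertex `x`, so that
`|C̃_i| = ∑ₓ [ρ x = i] W x`, with `0 ≤ W x ≤ d` (the assigned edges are incident to `x`) and
`∑ₓ W x = |Ẽ| = (1 - ζ) n d / 2`. Since the colours of distinct vertices are independent, the
exponential moment `E exp (-t |C̃_i|)` factorises into `∏ₓ (k - 1 + exp (-t W x)) / k`; for
`t = 2 / (3d)` each factor is at most `exp (-3 t W x / (5k))`, and Markov's inequality gives
`P (|C̃_i| < n d / (6k)) ≤ exp (n / (9k) - (1 - ζ) n / (5k)) ≤ exp (-49 n / (3200 k))`.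
A union bound over the `k` colours finishes the proof. Probabilities are counted as numbers of
colourings out of `k ^ n`.
-/

open Finset

lemma card_filter_comp_eq_sum_ite {β α κ : Type*} [Fintype α] [DecidableEq α] [DecidableEq κ]
    (s : Finset β) (g : β → α) (ρ : α → κ) (i : κ) :
    (#{e ∈ s | ρ (g e) = i} : ℝ) = ∑ x, if ρ x = i then (#{e ∈ s | g e = x} : ℝ) else 0 := by
  rw [card_eq_sum_card_fiberwise (f := g) (t := univ) (fun e _ => mem_univ _)]
  push_cast
  refine sum_congr rfl fun x _ => ?_
  split_ifs with h
  · congr 2; ext e; simp +contextual [h]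
  · simp only [filter_filter, Nat.cast_eq_zero, card_eq_zero, filter_eq_empty_iff]
    rintro e - ⟨he, rfl⟩
    exact h he

lemma sum_sub_card_filter_eq {ι β : Type*} [Fintype ι] [DecidableEq ι] (s : Finset β)
    (f : β → ι) (c : ℝ) : ∑ j, (c - #{x ∈ s | f x = j}) = Fintype.card ι * c - #s := by
  rw [sum_sub_distrib, sum_const, card_univ, nsmul_eq_mul,
    card_eq_sum_card_fiberwise fun x _ => mem_univ (f x), Nat.cast_sum]

lemma card_sub_mul_le_card_filter_forall {ι β : Type*} [Fintype ι] (s : Finset β)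
    (P : ι → β → Prop) [∀ i, DecidablePred (P i)] [DecidablePred fun x => ∀ i, P i x] {B : ℝ}
    (hB : ∀ i, (#{x ∈ s | ¬ P i x} : ℝ) ≤ B) :
    (#s : ℝ) - Fintype.card ι * B ≤ #{x ∈ s | ∀ i, P i x} := by
  classical
  have hunion : #{x ∈ s | ¬ ∀ i, P i x} ≤ ∑ i, #{x ∈ s | ¬ P i x} :=
    calc #{x ∈ s | ¬ ∀ i, P i x} = #(univ.biUnion fun i => {x ∈ s | ¬ P i x}) := by
          congr 1; ext x; simp
      _ ≤ ∑ i, #{x ∈ s | ¬ P i x} := card_biUnion_le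
  have hsplit : (#{x ∈ s | ∀ i, P i x} : ℝ) + #{x ∈ s | ¬ ∀ i, P i x} = #s := by
    exact_mod_cast card_filter_add_card_filter_not _
  have hsum : ∑ i, (#{x ∈ s | ¬ P i x} : ℝ) ≤ Fintype.card ι * B := by
    simpa using sum_le_sum fun i (_ : i ∈ univ) => hB i
  have hunion' : (#{x ∈ s | ¬ ∀ i, P i x} : ℝ) ≤ ∑ i, (#{x ∈ s | ¬ P i x} : ℝ) := by
    exact_mod_cast hunion
  linarith

section
open Real

lemma exp_neg_le_one_sub_three_fifths_mul {s : ℝ} (hs0 : 0 ≤ s) (hs1 : s ≤ 2 / 3) :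
    exp (-s) ≤ 1 - 3 / 5 * s := by
  -- `exp (-s) ≤ 1 / (1 + s)`, and `(1 + s) (1 - 3s/5) ≥ 1` exactly when `s ≤ 2/3`
  have h : exp (-s) * (1 + s) ≤ 1 := by
    calc exp (-s) * (1 + s) ≤ exp (-s) * exp s := by gcongr; linarith [add_one_le_exp s]
      _ = 1 := by rw [← exp_add, neg_add_cancel, exp_zero]
  nlinarith [exp_pos (-s)]

lemma sub_one_add_exp_neg_le {k s : ℝ} (hk : 0 < k) (hs0 : 0 ≤ s) (hs1 : s ≤ 2 / 3) :
    k - 1 + exp (-s) ≤ k * exp (-(3 / 5 * s / k)) :=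
  calc k - 1 + exp (-s) ≤ k * (1 - 3 / 5 * s / k) := by
        rw [mul_sub, mul_div_cancel₀ _ hk.ne']
        linarith [exp_neg_le_one_sub_three_fifths_mul hs0 hs1]
    _ ≤ k * exp (-(3 / 5 * s / k)) := by gcongr; linarith [add_one_le_exp (-(3 / 5 * s / k))]

lemma card_filter_lt_le_sum_exp {ι : Type*} (s : Finset ι) (f : ι → ℝ) {a t : ℝ} (ht : 0 ≤ t) :
    (#{x ∈ s | f x < a} : ℝ) ≤ ∑ x ∈ s, exp (t * (a - f x)) := by
  rw [card_filter, Nat.cast_sum]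
  gcongr with x
  split_ifs with h
  · exact_mod_cast one_le_exp (mul_nonneg ht (by linarith))
  · simp [(exp_pos _).le]

section Coloring
variable {α κ : Type*} [Fintype α] [DecidableEq α] [Fintype κ] [DecidableEq κ]

lemma sum_ite_eq_one_eq {i : κ} (A : ℝ) :
    ∑ c : κ, (if c = i then A else 1) = Fintype.card κ - 1 + A := by
  rw [Fintype.sum_eq_add_sum_compl i, if_pos rfl,
    sum_congr rfl fun c hc => if_neg (by simpa using hc)]
  simp [card_compl, Nat.cast_sub (Fintype.card_pos_iff.2 ⟨i⟩)]
  ring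

lemma sum_exp_neg_mul_sum_ite_eq (W : α → ℝ) (i : κ) (t : ℝ) :
    ∑ ρ : α → κ, exp (-(t * ∑ x, if ρ x = i then W x else 0)) =
      ∏ x, (Fintype.card κ - 1 + exp (-(t * W x))) := by
  have hfactor (x : α) : ∑ c : κ, exp (-(t * if c = i then W x else 0)) =
      Fintype.card κ - 1 + exp (-(t * W x)) := by
    simp only [apply_ite, mul_zero, neg_zero, exp_zero, sum_ite_eq_one_eq]
  simp_rw [← hfactor, Fintype.prod_sum, ← exp_sum, mul_sum, sum_neg_distrib]

theorem card_colorings_sum_ite_lt_le (W : α → ℝ) (i : κ) {t a : ℝ} (ht : 0 ≤ t)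
    (hW0 : ∀ x, 0 ≤ W x) (htW : ∀ x, t * W x ≤ 2 / 3) :
    (#{ρ : α → κ | ∑ x, (if ρ x = i then W x else 0) < a} : ℝ) ≤
      Fintype.card κ ^ Fintype.card α *
        exp (t * a - 3 / 5 * t * (∑ x, W x) / Fintype.card κ) := by
  have hk : (1 : ℝ) ≤ Fintype.card κ := by exact_mod_cast Fintype.card_pos_iff.2 ⟨i⟩
  calc _ ≤ ∑ ρ : α → κ, exp (t * (a - ∑ x, if ρ x = i then W x else 0)) :=
        card_filter_lt_le_sum_exp _ _ ht
    _ = exp (t * a) * ∏ x, (Fintype.card κ - 1 + exp (-(t * W x))) := by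
        rw [← sum_exp_neg_mul_sum_ite_eq W i, mul_sum]
        simp_rw [← exp_add, mul_sub, sub_eq_add_neg]
    _ ≤ exp (t * a) * ∏ x, (Fintype.card κ * exp (-(3 / 5 * (t * W x) / Fintype.card κ))) := by
        refine mul_le_mul_of_nonneg_left (prod_le_prod (fun x _ => ?_) (fun x _ => ?_))
          (exp_pos _).le
        · linarith [exp_pos (-(t * W x))]
        · exact sub_one_add_exp_neg_le (by linarith) (mul_nonneg ht (hW0 x)) (htW x)
    _ = _ := by
        rw [prod_mul_distrib, prod_const, card_univ, ← exp_sum, mul_left_comm, ← exp_add]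
        congr 2
        rw [sum_neg_distrib, ← sum_div, ← mul_sum, ← mul_sum]
        ring

end Coloring

end

namespace SimpleGraph
variable {V : Type*} [Fintype V] (G : SimpleGraph V) [DecidableRel G.Adj]

lemma card_filter_eq_le_degree [DecidableEq V] {s : Finset (Sym2 V)} (hs : s ⊆ G.edgeFinset)
    {g : Sym2 V → V} (hg : ∀ e ∈ s, g e ∈ e) (x : V) : #{e ∈ s | g e = x} ≤ G.degree x := by
  rw [← card_incidenceFinset_eq_degree]
  refine card_le_card fun e he => ?_
  obtain ⟨hes, rfl⟩ := mem_filter.1 he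
  exact (mem_incidenceFinset _ _ _).2 ⟨mem_edgeFinset.1 (hs hes), hg e hes⟩

lemma IsRegularOfDegree.two_mul_card_edgeFinset {d : ℕ} (h : G.IsRegularOfDegree d) :
    2 * #G.edgeFinset = Fintype.card V * d := by
  simp [← sum_degrees_eq_twice_card_edges, h.degree_eq, mul_comm]

theorem card_colorings_card_filter_lt_le {κ : Type*} [Fintype κ] [DecidableEq κ] [DecidableEq V]
    {d : ℕ} (hd : 0 < d) (hdeg : ∀ x, G.degree x ≤ d) {s : Finset (Sym2 V)}
    (hs : s ⊆ G.edgeFinset) {g : Sym2 V → V} (hg : ∀ e ∈ s, g e ∈ e) (i : κ) (a : ℝ) :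
    (#{ρ : V → κ | (#{e ∈ s | ρ (g e) = i} : ℝ) < a} : ℝ) ≤
      Fintype.card κ ^ Fintype.card V *
        Real.exp (2 * a / (3 * d) - 2 * #s / (5 * d * Fintype.card κ)) := by
  set W : V → ℝ := fun x => #{e ∈ s | g e = x}
  have hWd (x : V) : W x ≤ d := by
    simp only [W]
    exact_mod_cast (G.card_filter_eq_le_degree hs hg x).trans (hdeg x)
  have hsumW : ∑ x, W x = #s := by
    simp only [W]
    exact_mod_cast (card_eq_sum_card_fiberwise fun e _ => mem_univ (g e)).symm
  have htW (x : V) : 2 / (3 * d) * W x ≤ 2 / 3 :=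
    calc 2 / (3 * d) * W x ≤ 2 / (3 * d) * d := by gcongr; exact hWd x
      _ = 2 / 3 := by field_simp
  have hcount (ρ : V → κ) : (#{e ∈ s | ρ (g e) = i} : ℝ) = ∑ x, if ρ x = i then W x else 0 :=
    card_filter_comp_eq_sum_ite s g ρ i
  simp only [hcount]
  convert card_colorings_sum_ite_lt_le W i (a := a) (by positivity) (fun x => by positivity) htW
    using 3
  rw [hsumW]
  field_simp

end SimpleGraph

lemma chernoff_exponent_le {n d k ζ : ℝ} (hn : 0 ≤ n) (hd : 0 < d) (hk : 0 < k)
    (hζ : ζ ≤ 1 / 100) :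
    2 * (n * d / (6 * k)) / (3 * d) - 2 * ((1 - ζ) * (n * d / 2)) / (5 * d * k) ≤
      -(49 * n) / (3200 * k) := by
  rw [← sub_nonneg]
  -- the left-hand side is `n / (9k) - (1 - ζ) n / (5k)`
  have h : -(49 * n) / (3200 * k) - (2 * (n * d / (6 * k)) / (3 * d) -
      2 * ((1 - ζ) * (n * d / 2)) / (5 * d * k)) = n / k * (2119 / 28800 - ζ / 5) := by
    field_simp
    ring
  rw [h]
  exact mul_nonneg (by positivity) (by linarith)

open Classical in
theorem stmt16_general (m n d k : ℕ) (hnm : n = 2 * m)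
    (G : SimpleGraph (Fin n)) [DecidableRel G.Adj]
    (hreg : G.IsRegularOfDegree d)
    (ζ : ℝ) (hζ1 : ζ ≤ 1 / 100)
    (hktail : (k : ℝ) * Real.exp (-(49 * (n : ℝ)) / (3200 * (k : ℝ))) ≤ 0.01)
    (v : Fin m → Fin n)
    (Et : Finset (Sym2 (Fin n))) (hEtE : Et ⊆ G.edgeFinset)
    (π : Sym2 (Fin n) → Fin m) (hπ : ∀ e ∈ Et, v (π e) ∈ e)
    (hslack : ∑ j : Fin m, ((d : ℝ) - ((Et.filter (fun e => π e = j)).card : ℝ)) =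
      ζ * (G.edgeFinset.card : ℝ)) :
    0.99 * ((k : ℝ) ^ n) ≤
      ((Finset.univ.filter (fun ρ : Fin n → Fin k =>
          ∀ i : Fin k,
            (n : ℝ) * (d : ℝ) / (6 * (k : ℝ)) ≤
              ((Et.filter (fun e => ρ (v (π e)) = i)).card : ℝ))).card : ℝ) := by
  rcases Nat.eq_zero_or_pos d with rfl | hd
  · simp only [CharP.cast_eq_zero, mul_zero, zero_div, Nat.cast_nonneg, implies_true, filter_true,
      card_univ, Fintype.card_pi, Fintype.card_fin, prod_const, Nat.cast_pow]
    linarith [pow_nonneg (Nat.cast_nonneg k : (0 : ℝ) ≤ k) n]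
  have hEt : (#Et : ℝ) = (1 - ζ) * (n * d / 2) := by
    have hE : (2 * #G.edgeFinset : ℝ) = n * d := by
      exact_mod_cast Fintype.card_fin n ▸ hreg.two_mul_card_edgeFinset
    have hm : (m : ℝ) = n / 2 := by rw [hnm]; push_cast; ring
    rw [sum_sub_card_filter_eq, Fintype.card_fin, hm,
      show (#G.edgeFinset : ℝ) = n * d / 2 by linarith] at hslack
    linarith
  have hbad (i : Fin k) :
      (#{ρ : Fin n → Fin k | ¬ (n : ℝ) * d / (6 * k) ≤ #{e ∈ Et | ρ (v (π e)) = i}} : ℝ) ≤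
        k ^ n * Real.exp (-(49 * (n : ℝ)) / (3200 * k)) := by
    have h := G.card_colorings_card_filter_lt_le hd (fun x => (hreg.degree_eq x).le) hEtE hπ i
      (n * d / (6 * k))
    simp only [Fintype.card_fin, hEt] at h
    simp only [not_le]
    refine h.trans ?_
    gcongr
    exact chernoff_exponent_le (by positivity) (by positivity) (by exact_mod_cast i.pos) hζ1
  have := card_sub_mul_le_card_filter_forall univ _ hbad
  simp only [card_univ, Fintype.card_fun, Fintype.card_fin, Nat.cast_pow] at this
  nlinarith [pow_nonneg (Nat.cast_nonneg k : (0 : ℝ) ≤ k) n]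

open Classical in
/-- given a cover `S = {v_1,…,v_{n/2}}` assigning edges via `π` with slack
`Σ d_j = ζ|E|`, a uniformly random coloring makes every cluster
`C̃_i = {e ∈ Ẽ : ρ(v_{π(e)}) = i}` of size at least `nd/(6k)`, with probability at least
`0.99`. -/
theorem stmt16 (m n d k : ℕ) (hnm : n = 2 * m) (hk : 1 ≤ k)
    (G : SimpleGraph (Fin n)) [DecidableRel G.Adj]
    (hreg : G.IsRegularOfDegree d)
    (ζ : ℝ) (hζ0 : 0 < ζ) (hζ1 : ζ ≤ 1 / 100)
    (hktail : (k : ℝ) * Real.exp (-(49 * (n : ℝ)) / (3200 * (k : ℝ))) ≤ 0.01)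
    (v : Fin m → Fin n) (hv : Function.Injective v)
    (Et : Finset (Sym2 (Fin n))) (hEtE : Et ⊆ G.edgeFinset)
    (π : Sym2 (Fin n) → Fin m) (hπ : ∀ e ∈ Et, v (π e) ∈ e)
    (hslack : ∑ j : Fin m, ((d : ℝ) - ((Et.filter (fun e => π e = j)).card : ℝ)) =
      ζ * (G.edgeFinset.card : ℝ)) :
    0.99 * ((k : ℝ) ^ n) ≤
      ((Finset.univ.filter (fun ρ : Fin n → Fin k =>
          ∀ i : Fin k,
            (n : ℝ) * (d : ℝ) / (6 * (k : ℝ)) ≤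
              ((Et.filter (fun e => ρ (v (π e)) = i)).card : ℝ))).card : ℝ) :=
  stmt16_general m n d k hnm G hreg ζ hζ1 hktail v Et hEtE π hπ hslack
end
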